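/- Let {J^a_n} on V and {J'^a_n} on W be level-k representations of affine sl(2), let U₁, …, U_r be sl(2,ℂ)-modules with representation morphisms ρ₁, …, ρ_r, let z₁, …, z_r be nonzero complex numbers, and let s ∈ ℤ. For each i define ρᵢ^{(s)} by ρᵢ^{(s)}(J⁰) := ρᵢ(J⁰) and ρᵢ^{(s)}(J^±) := zᵢ^{∓s}·ρᵢ(J^±); then each ρᵢ^{(s)} is again an sl(2,ℂ)-module structure on Uᵢ, and a linear functional β on V ⊗ W ⊗ U₁ ⊗ ⋯ ⊗ U_r satisfies β ∘ ( J^a_m ⊗ id + id ⊗ J'^a_{−m} ⊗ id + Σ_{i=1}^r zᵢ^m · (ρᵢ(J^a) acting in the i-th U-factor) ) = 0 for all a ∈ {0,+,−} and all m ∈ ℤ if and only if β satisfies the analogous family of conditions in which {J^a_n} is replaced by its spectral flow ϑ_s, {J'^a_n} by its spectral flow ϑ_{−s}, and each ρᵢ by ρᵢ^{(s)}. In particular the two spaces of such coinvariant functionals are equal. -/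

import Mathlib

/-!
Level-`k` representations of affine `sl(2)`.

A level-`k` representation of affine `sl(2)` on a complex vector space `V` is a
family of linear endomorphisms `J⁰_n, J⁺_n, J⁻_n` (`n ∈ ℤ`) satisfying
`[J⁺_m, J⁻_n] = J⁰_{m+n} + k·m·δ_{m+n,0}·id`, `[J⁰_m, J^±_n] = ±2 J^±_{m+n}`,
`[J⁰_m, J⁰_n] = 2k·m·δ_{m+n,0}·id`, `[J⁺_m, J⁺_n] = [J⁻_m, J⁻_n] = 0`.

For `s ∈ ℤ`, the spectral flow `ϑ_s` replaces `J^±_n` by `J^±_{n∓s}` and `J⁰_n` by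
`J⁰_n − s·k·δ_{n,0}·id`.
-/

noncomputable section

/-- a family of operators `J⁰_n, J⁺_n, J⁻_n` (`n ∈ ℤ`) on `V` -/
structure AffineFamily (V : Type*) [AddCommGroup V] [Module ℂ V] where
  Jz : ℤ → Module.End ℂ V
  Jp : ℤ → Module.End ℂ V
  Jm : ℤ → Module.End ℂ V

variable {V W : Type*}

/-- the commutation relations making an `AffineFamily` a level-`k` representation of
affine `sl(2)` -/
def IsLevelRep [AddCommGroup V] [Module ℂ V] (k : ℂ) (ρ : AffineFamily V) : Prop :=
  (∀ m n : ℤ, ρ.Jp m * ρ.Jm n - ρ.Jm n * ρ.Jp m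
      = ρ.Jz (m + n) + (if m + n = 0 then k * (m : ℂ) else 0) • 1) ∧
  (∀ m n : ℤ, ρ.Jz m * ρ.Jp n - ρ.Jp n * ρ.Jz m = (2 : ℂ) • ρ.Jp (m + n)) ∧
  (∀ m n : ℤ, ρ.Jz m * ρ.Jm n - ρ.Jm n * ρ.Jz m = (-2 : ℂ) • ρ.Jm (m + n)) ∧
  (∀ m n : ℤ, ρ.Jz m * ρ.Jz n - ρ.Jz n * ρ.Jz m
      = (if m + n = 0 then 2 * k * (m : ℂ) else 0) • 1) ∧
  (∀ m n : ℤ, ρ.Jp m * ρ.Jp n = ρ.Jp n * ρ.Jp m) ∧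
  (∀ m n : ℤ, ρ.Jm m * ρ.Jm n = ρ.Jm n * ρ.Jm m)

/-- the spectral flow `ϑ_s` of a level-`k` family:
`J^±_n ↦ J^±_{n∓s}`, `J⁰_n ↦ J⁰_n − s·k·δ_{n,0}·id` -/
def flow [AddCommGroup V] [Module ℂ V] (k : ℂ) (s : ℤ) (ρ : AffineFamily V) :
    AffineFamily V where
  Jz n := ρ.Jz n - (if n = 0 then (s : ℂ) * k else 0) • 1
  Jp n := ρ.Jp (n - s)
  Jm n := ρ.Jm (n + s)

open scoped TensorProduct

/-- a triple of operators representing the basis `J⁰, J⁺, J⁻` of `sl(2,ℂ)` -/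
structure Sl2Triple (U : Type*) [AddCommGroup U] [Module ℂ U] where
  Jz : Module.End ℂ U
  Jp : Module.End ℂ U
  Jm : Module.End ℂ U

/-- the `sl(2,ℂ)` commutation relations `[J⁺,J⁻] = J⁰`, `[J⁰,J^±] = ±2J^±` -/
def IsSl2Rep {U : Type*} [AddCommGroup U] [Module ℂ U] (σ : Sl2Triple U) : Prop :=
  σ.Jp * σ.Jm - σ.Jm * σ.Jp = σ.Jz ∧
  σ.Jz * σ.Jp - σ.Jp * σ.Jz = (2 : ℂ) • σ.Jp ∧
  σ.Jz * σ.Jm - σ.Jm * σ.Jz = (-2 : ℂ) • σ.Jm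

/-- the twisted `sl(2,ℂ)`-structure `ρ^{(s)}`: `J⁰ ↦ J⁰`, `J^± ↦ z^{∓s}·J^±` -/
def evalFlow {U : Type*} [AddCommGroup U] [Module ℂ U] (z : ℂ) (s : ℤ)
    (σ : Sl2Triple U) : Sl2Triple U :=
  ⟨σ.Jz, z ^ (-s) • σ.Jp, z ^ s • σ.Jm⟩

variable {r : ℕ} {U : Fin r → Type*} [∀ i, AddCommGroup (U i)] [∀ i, Module ℂ (U i)]

/-- the operator acting as `A` in the `i`-th factor of `U₁ ⊗ ⋯ ⊗ U_r` and as the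
identity in the others -/
def actAt (i : Fin r) (A : Module.End ℂ (U i)) : Module.End ℂ (⨂[ℂ] i, U i) :=
  PiTensorProduct.map (Function.update (fun j => (LinearMap.id : U j →ₗ[ℂ] U j)) i A)

variable [AddCommGroup V] [Module ℂ V] [AddCommGroup W] [Module ℂ W]

/-- the total operator `A ⊗ id + id ⊗ B ⊗ id + Σᵢ cᵢ·(Cᵢ in the i-th U-factor)` on
`V ⊗ (W ⊗ (U₁ ⊗ ⋯ ⊗ U_r))` -/
def opTot (A : Module.End ℂ V) (B : Module.End ℂ W) (C : ∀ i, Module.End ℂ (U i))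
    (c : Fin r → ℂ) : Module.End ℂ (V ⊗[ℂ] (W ⊗[ℂ] (⨂[ℂ] i, U i))) :=
  TensorProduct.map A LinearMap.id
    + TensorProduct.map LinearMap.id (TensorProduct.map B LinearMap.id)
    + ∑ i : Fin r, c i •
        TensorProduct.map LinearMap.id (TensorProduct.map LinearMap.id (actAt i (C i)))

/-- the conformal block (coinvariance) conditions on `ℂP¹` for insertions of the
affine modules `V`, `W` at `0`, `∞` and evaluation `sl(2,ℂ)`-modules `Uᵢ` at the
points `zᵢ`:
`β ∘ (J^a_m ⊗ id + id ⊗ J'^a_{−m} ⊗ id + Σᵢ zᵢ^m·ρᵢ(J^a)⁽ⁱ⁾) = 0` for all `a`, `m` -/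
def IsEvalBlock (ρ : AffineFamily V) (ρ' : AffineFamily W) (σ : ∀ i, Sl2Triple (U i))
    (z : Fin r → ℂ) (β : (V ⊗[ℂ] (W ⊗[ℂ] (⨂[ℂ] i, U i))) →ₗ[ℂ] ℂ) : Prop :=
  ∀ m : ℤ,
    β ∘ₗ opTot (ρ.Jz m) (ρ'.Jz (-m)) (fun i => (σ i).Jz) (fun i => z i ^ m) = 0 ∧
    β ∘ₗ opTot (ρ.Jp m) (ρ'.Jp (-m)) (fun i => (σ i).Jp) (fun i => z i ^ m) = 0 ∧
    β ∘ₗ opTot (ρ.Jm m) (ρ'.Jm (-m)) (fun i => (σ i).Jm) (fun i => z i ^ m) = 0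


/-!
Twisting by `J^± ↦ z^{∓s} J^±` rescales `J⁺` and `J⁻` by mutually inverse factors, so it
preserves the `sl(2)` relations. Under the flows, the `J^±` conditions at mode `m` are the
original ones at mode `m ∓ s`: the modes on `V` and `W` shift by `∓s` and `±s`, and the
twist turns the weight `zᵢ^m` into `zᵢ^{m∓s}`. The `J⁰` conditions are unchanged, because
the central shifts `-s k` on `V` (from `ϑ_s`) and `+s k` on `W` (from `ϑ_{-s}`) cancel in
the total operator.
-/

theorem IsSl2Rep.evalFlow {U : Type*} [AddCommGroup U] [Module ℂ U] {σ : Sl2Triple U}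
    (hσ : IsSl2Rep σ) {z : ℂ} (hz : z ≠ 0) (s : ℤ) : IsSl2Rep (_root_.evalFlow z s σ) := by
  obtain ⟨hpm, hzp, hzm⟩ := hσ
  refine ⟨?_, ?_, ?_⟩
  · simp only [_root_.evalFlow, smul_mul_smul_comm, ← zpow_add₀ hz, neg_add_cancel,
      add_neg_cancel, zpow_zero, one_smul, hpm]
  · rw [_root_.evalFlow, mul_smul_comm, smul_mul_assoc, ← smul_sub, hzp, smul_comm]
  · rw [_root_.evalFlow, mul_smul_comm, smul_mul_assoc, ← smul_sub, hzm, smul_comm]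

theorem actAt_smul (i : Fin r) (a : ℂ) (A : Module.End ℂ (U i)) :
    actAt i (a • A) = a • actAt i A :=
  PiTensorProduct.map_update_smul _ _ _ _

theorem opTot_smul_evalOps (A : Module.End ℂ V) (B : Module.End ℂ W)
    (C : ∀ i, Module.End ℂ (U i)) (c a : Fin r → ℂ) :
    opTot A B (fun i => a i • C i) c = opTot A B C (fun i => c i * a i) := by
  simp only [opTot, actAt_smul, TensorProduct.map_smul_right, smul_smul]

theorem opTot_sub_smul_one_add_smul_one (A : Module.End ℂ V) (B : Module.End ℂ W)
    (C : ∀ i, Module.End ℂ (U i)) (c : Fin r → ℂ) (a : ℂ) :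
    opTot (A - a • 1) (B + a • 1) C c = opTot A B C c := by
  simp only [opTot, Module.End.one_eq_id, sub_eq_add_neg, ← neg_smul, TensorProduct.map_add_left,
    TensorProduct.map_smul_left, TensorProduct.map_add_right, TensorProduct.map_smul_right,
    TensorProduct.map_id]
  module

section SpectralFlow

variable (k : ℂ) (ρ : AffineFamily V) (ρ' : AffineFamily W) (σ : ∀ i, Sl2Triple (U i))
  {z : Fin r → ℂ} (s m : ℤ)

theorem flow_neg_Jz_neg :
    (flow k (-s) ρ').Jz (-m) = ρ'.Jz (-m) + (if m = 0 then (s : ℂ) * k else 0) • 1 := by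
  simp only [flow, neg_eq_zero, Int.cast_neg]
  split_ifs <;> simp

theorem opTot_flow_Jz :
    opTot ((flow k s ρ).Jz m) ((flow k (-s) ρ').Jz (-m))
        (fun i => (evalFlow (z i) s (σ i)).Jz) (fun i => z i ^ m)
      = opTot (ρ.Jz m) (ρ'.Jz (-m)) (fun i => (σ i).Jz) (fun i => z i ^ m) := by
  rw [flow_neg_Jz_neg]
  exact opTot_sub_smul_one_add_smul_one _ _ _ _ _

theorem opTot_flow_Jp (hz : ∀ i, z i ≠ 0) :
    opTot ((flow k s ρ).Jp m) ((flow k (-s) ρ').Jp (-m))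
        (fun i => (evalFlow (z i) s (σ i)).Jp) (fun i => z i ^ m)
      = opTot (ρ.Jp (m - s)) (ρ'.Jp (-(m - s))) (fun i => (σ i).Jp)
          (fun i => z i ^ (m - s)) := by
  simp only [flow, evalFlow, opTot_smul_evalOps, ← zpow_add₀ (hz _), ← sub_eq_add_neg,
    neg_sub, sub_neg_eq_add, neg_add_eq_sub]

theorem opTot_flow_Jm (hz : ∀ i, z i ≠ 0) :
    opTot ((flow k s ρ).Jm m) ((flow k (-s) ρ').Jm (-m))
        (fun i => (evalFlow (z i) s (σ i)).Jm) (fun i => z i ^ m)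
      = opTot (ρ.Jm (m + s)) (ρ'.Jm (-(m + s))) (fun i => (σ i).Jm)
          (fun i => z i ^ (m + s)) := by
  simp only [flow, evalFlow, opTot_smul_evalOps, ← zpow_add₀ (hz _), neg_add]

theorem isEvalBlock_flow_iff (hz : ∀ i, z i ≠ 0)
    (β : (V ⊗[ℂ] (W ⊗[ℂ] (⨂[ℂ] i, U i))) →ₗ[ℂ] ℂ) :
    IsEvalBlock (flow k s ρ) (flow k (-s) ρ') (fun i => evalFlow (z i) s (σ i)) z β
      ↔ IsEvalBlock ρ ρ' σ z β := by
  simp only [IsEvalBlock, forall_and, opTot_flow_Jz, opTot_flow_Jp k ρ ρ' σ s _ hz,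
    opTot_flow_Jm k ρ ρ' σ s _ hz]
  refine and_congr Iff.rfl
    (and_congr ⟨fun h m => ?_, fun h m => h _⟩ ⟨fun h m => ?_, fun h m => h _⟩)
  · simpa using h (m + s)
  · simpa using h (m - s)

end SpectralFlow

theorem statement14_general (k : ℂ)
    (ρ : AffineFamily V) (ρ' : AffineFamily W)
    (σ : ∀ i, Sl2Triple (U i)) (hσ : ∀ i, IsSl2Rep (σ i))
    (z : Fin r → ℂ) (hz : ∀ i, z i ≠ 0) (s : ℤ) :
    (∀ i, IsSl2Rep (evalFlow (z i) s (σ i))) ∧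
    (∀ β : (V ⊗[ℂ] (W ⊗[ℂ] (⨂[ℂ] i, U i))) →ₗ[ℂ] ℂ,
      IsEvalBlock ρ ρ' σ z β ↔
        IsEvalBlock (flow k s ρ) (flow k (-s) ρ')
          (fun i => evalFlow (z i) s (σ i)) z β) ∧
    {β : (V ⊗[ℂ] (W ⊗[ℂ] (⨂[ℂ] i, U i))) →ₗ[ℂ] ℂ | IsEvalBlock ρ ρ' σ z β}
      = {β | IsEvalBlock (flow k s ρ) (flow k (-s) ρ')
          (fun i => evalFlow (z i) s (σ i)) z β} := by
  have hblock β := (isEvalBlock_flow_iff k ρ ρ' σ s hz β).symm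
  exact ⟨fun i => (hσ i).evalFlow (hz i) s, hblock, Set.ext hblock⟩

/-- Let `{J^a_n}` on `V` and `{J'^a_n}` on `W` be level-`k`
representations of affine `sl(2)`, let `U₁, …, U_r` be `sl(2,ℂ)`-modules with
representations `ρᵢ = σ i`, let `z₁, …, z_r` be nonzero complex numbers, and `s ∈ ℤ`.
Each twisted structure `ρᵢ^{(s)}` (`J⁰ ↦ J⁰`, `J^± ↦ zᵢ^{∓s}·J^±`) is again an
`sl(2,ℂ)`-module structure, and a functional `β` on `V ⊗ W ⊗ U₁ ⊗ ⋯ ⊗ U_r` satisfies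
the conformal block conditions for `(ρ, ρ', (ρᵢ))` iff it satisfies them for
`(ϑ_s ρ, ϑ_{−s} ρ', (ρᵢ^{(s)}))`; in particular the two spaces of coinvariant
functionals are equal. -/
theorem statement14 (k : ℂ)
    (ρ : AffineFamily V) (hρ : IsLevelRep k ρ)
    (ρ' : AffineFamily W) (hρ' : IsLevelRep k ρ')
    (σ : ∀ i, Sl2Triple (U i)) (hσ : ∀ i, IsSl2Rep (σ i))
    (z : Fin r → ℂ) (hz : ∀ i, z i ≠ 0) (s : ℤ) :
    (∀ i, IsSl2Rep (evalFlow (z i) s (σ i))) ∧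
    (∀ β : (V ⊗[ℂ] (W ⊗[ℂ] (⨂[ℂ] i, U i))) →ₗ[ℂ] ℂ,
      IsEvalBlock ρ ρ' σ z β ↔
        IsEvalBlock (flow k s ρ) (flow k (-s) ρ')
          (fun i => evalFlow (z i) s (σ i)) z β) ∧
    {β : (V ⊗[ℂ] (W ⊗[ℂ] (⨂[ℂ] i, U i))) →ₗ[ℂ] ℂ | IsEvalBlock ρ ρ' σ z β}
      = {β | IsEvalBlock (flow k s ρ) (flow k (-s) ρ')
          (fun i => evalFlow (z i) s (σ i)) z β} :=
  statement14_general k ρ ρ' σ hσ z hz s
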